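/- arXiv:2307.10386 — 6 statements merged into one kernel-verified Lean document; each statement's English description precedes it below -/
import Mathlib

section
/- Let r1, r2 ≥ 0, λ2 ≥ λ1 ≥ 0, θ ∈ ℝ and α ∈ ℝ with |α| ≤ e^{-(r1+r2)}, and let σ_sp = K_bs (π_d(r1,r2) + λ1 φ1 + λ2 φ2) K_bs^T. Then the squeezing of formation of σ_sp satisfies S(σ_sp) ≤ r1 + r2. -/
open Matrix Real ComplexOrder

noncomputable section

/-- The symplectic form on two modes, ordering (x1,p1,x2,p2). -/
def Omega4 : Matrix (Fin 4) (Fin 4) ℝ :=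
  !![0,1,0,0; -1,0,0,0; 0,0,0,1; 0,0,-1,0]

/-- Complexification of a real 4×4 matrix. -/
def cplx (A : Matrix (Fin 4) (Fin 4) ℝ) : Matrix (Fin 4) (Fin 4) ℂ :=
  A.map (fun a => (a : ℂ))

/-- σ is a valid two-mode covariance matrix: real symmetric and σ + iΩ ⪰ 0. -/
def IsCov (σ : Matrix (Fin 4) (Fin 4) ℝ) : Prop :=
  σ.IsSymm ∧ (cplx σ + Complex.I • cplx Omega4).PosSemidef

/-- A pure covariance matrix additionally has determinant 1. -/
def IsPureCov (p : Matrix (Fin 4) (Fin 4) ℝ) : Prop :=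
  IsCov p ∧ p.det = 1

/-- Eigenvalues (roots of the characteristic polynomial) sorted increasingly. -/
def sortedEigs (A : Matrix (Fin 4) (Fin 4) ℝ) : List ℝ :=
  A.charpoly.roots.sort (· ≤ ·)

/-- The (j+1)-th lowest eigenvalue (0-indexed). -/
def eig (j : ℕ) (A : Matrix (Fin 4) (Fin 4) ℝ) : ℝ := (sortedEigs A).getD j 0

/-- Symplectic eigenvalues: absolute values of the eigenvalues of iΩσ. -/
def sympEigs (σ : Matrix (Fin 4) (Fin 4) ℝ) : Multiset ℝ :=
  ((Complex.I • (cplx Omega4 * cplx σ)).charpoly.roots).map (fun z => ‖z‖)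

/-- The smallest symplectic eigenvalue ν₁↑. -/
def nu1 (σ : Matrix (Fin 4) (Fin 4) ℝ) : ℝ :=
  ((sympEigs σ).sort (· ≤ ·)).getD 0 0

/-- Λ = diag(1,1,1,-1), implementing partial transposition. -/
def Lam : Matrix (Fin 4) (Fin 4) ℝ := Matrix.diagonal ![1,1,1,-1]

/-- The partial transpose σ^Γ = ΛσΛ. -/
def ptrans (σ : Matrix (Fin 4) (Fin 4) ℝ) : Matrix (Fin 4) (Fin 4) ℝ := Lam * σ * Lam

/-- The auxiliary function h. -/
def hAux (x : ℝ) : ℝ :=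
  ((1+x)^2/(4*x)) * Real.log ((1+x)^2/(4*x))
    - ((1-x)^2/(4*x)) * Real.log ((1-x)^2/(4*x))

/-- h₀[x] = h[e^{-x}]. -/
def h0Aux (x : ℝ) : ℝ := hAux (Real.exp (-x))

/-- Entanglement of formation of a pure covariance matrix. -/
def EOFpure (p : Matrix (Fin 4) (Fin 4) ℝ) : ℝ :=
  if nu1 (ptrans p) < 1 then hAux (nu1 (ptrans p)) else 0

/-- Entanglement of formation of a mixed covariance matrix. -/
def EOF (σ : Matrix (Fin 4) (Fin 4) ℝ) : ℝ :=
  sInf { e : ℝ | ∃ p, IsPureCov p ∧ (σ - p).PosSemidef ∧ e = EOFpure p }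

/-- Squeezing of formation of a pure covariance matrix:
half-sum of the logarithms of its two largest eigenvalues. -/
def SOFpure (p : Matrix (Fin 4) (Fin 4) ℝ) : ℝ :=
  (1/2) * (Real.log (eig 2 p) + Real.log (eig 3 p))

/-- Squeezing of formation of a mixed covariance matrix. -/
def SOF (σ : Matrix (Fin 4) (Fin 4) ℝ) : ℝ :=
  sInf { s : ℝ | ∃ p, IsPureCov p ∧ (σ - p).PosSemidef ∧ s = SOFpure p }

/-- Symplectic form on four modes (two system + two ancillary modes). -/
def Omega8 : Matrix (Fin 4 ⊕ Fin 4) (Fin 4 ⊕ Fin 4) ℝ :=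
  Matrix.fromBlocks Omega4 0 0 Omega4

/-- A passive transformation on two modes: real orthogonal and symplectic. -/
def IsPassive4 (K : Matrix (Fin 4) (Fin 4) ℝ) : Prop :=
  K * Kᵀ = 1 ∧ K * Omega4 * Kᵀ = Omega4

/-- A passive transformation on four modes: real orthogonal and symplectic. -/
def IsPassive8 (K : Matrix (Fin 4 ⊕ Fin 4) (Fin 4 ⊕ Fin 4) ℝ) : Prop :=
  K * Kᵀ = 1 ∧ K * Omega8 * Kᵀ = Omega8

/-- The entanglement of formation potential: supremum of the EOF of the
leading 4×4 principal submatrix of K(σ ⊕ I₄)Kᵀ over 8×8 passive K. -/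
def EOFP (σ : Matrix (Fin 4) (Fin 4) ℝ) : ℝ :=
  sSup { e : ℝ | ∃ K, IsPassive8 K ∧
    e = EOF ((K * (Matrix.fromBlocks σ 0 0 1) * Kᵀ).toBlocks₁₁) }

/-- The balanced beam splitter. -/
def Kbs : Matrix (Fin 4) (Fin 4) ℝ :=
  (Real.sqrt 2)⁻¹ • !![1,0,1,0; 0,1,0,1; -1,0,1,0; 0,-1,0,1]

/-- The locally squeezed two-mode pure state in diagonal form. -/
def piD (r₁ r₂ : ℝ) : Matrix (Fin 4) (Fin 4) ℝ :=
  Matrix.diagonal ![Real.exp (-(2*r₁)), Real.exp (2*r₁), Real.exp (2*r₂), Real.exp (-(2*r₂))]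

/-- The vector |φ₁⟩. -/
def phi1v (α θ : ℝ) : Fin 4 → ℝ :=
  ![α * Real.cos θ, Real.sin θ, Real.cos θ, α * Real.sin θ]

/-- The vector |φ₂⟩. -/
def phi2v (α θ : ℝ) : Fin 4 → ℝ :=
  ![α * Real.sin θ, -Real.cos θ, Real.sin θ, -(α * Real.cos θ)]

/-- The special class of states σ_sp. -/
def sigmaSp (r₁ r₂ l₁ l₂ α θ : ℝ) : Matrix (Fin 4) (Fin 4) ℝ :=
  Kbs * (piD r₁ r₂ + l₁ • Matrix.vecMulVec (phi1v α θ) (phi1v α θ)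
    + l₂ • Matrix.vecMulVec (phi2v α θ) (phi2v α θ)) * Kbsᵀ

/-- The correlated-noise matrix N_α. -/
def Nmat (α : ℝ) : Matrix (Fin 4) (Fin 4) ℝ :=
  !![α^2,0,α,0; 0,1,0,α; α,0,1,0; 0,α,0,α^2]

/-- The de-cross-correlated state σ_dcc. -/
def sigmaDcc (r₁ r₂ l₂ α : ℝ) : Matrix (Fin 4) (Fin 4) ℝ :=
  Kbs * (piD r₁ r₂ + l₂ • Nmat α) * Kbsᵀ

/-- The two-mode squeezer S₂(r). -/
def S2 (r : ℝ) : Matrix (Fin 4) (Fin 4) ℝ :=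
  Kbs * Matrix.diagonal ![Real.exp r, Real.exp (-r), Real.exp (-r), Real.exp r] * Kbsᵀ

/-- Separability (PPT condition): σ^Γ + iΩ ⪰ 0. -/
def IsSep (σ : Matrix (Fin 4) (Fin 4) ℝ) : Prop :=
  (cplx (ptrans σ) + Complex.I • cplx Omega4).PosSemidef

/-- De-cross-correlated two-mode state with x-block C_q and p-block C_p,
in quadrature ordering (x1,p1,x2,p2). -/
def dccGen (Cq Cp : Matrix (Fin 2) (Fin 2) ℝ) : Matrix (Fin 4) (Fin 4) ℝ :=
  !![Cq 0 0, 0, Cq 0 1, 0;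
     0, Cp 0 0, 0, Cp 0 1;
     Cq 1 0, 0, Cq 1 1, 0;
     0, Cp 1 0, 0, Cp 1 1]

/-- De-cross-correlated pure state with x-block C_q and p-block C_q⁻¹. -/
def dccM (Cq : Matrix (Fin 2) (Fin 2) ℝ) : Matrix (Fin 4) (Fin 4) ℝ :=
  dccGen Cq Cq⁻¹

/-!
The pure state `π = K_bs π_d(r₁, r₂) K_bsᵀ` is a competitor in the infimum defining
`S(σ_sp)`: it is pure because `π_d` is a product of two minimum-uncertainty modes and the
beam splitter is orthogonal and symplectic, and `σ_sp - π = K_bs (λ₁ φ₁ + λ₂ φ₂) K_bsᵀ ⪰ 0`.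
Its eigenvalues are those of `π_d`, namely `e^{±2r₁}, e^{±2r₂}`; for `r₁, r₂ ≥ 0` the two largest
are `e^{2r₁}, e^{2r₂}`, so `S(π) = r₁ + r₂`.
-/

namespace Matrix

variable {n R : Type*} [Fintype n] [DecidableEq n]

theorem charpoly_mul_mul_transpose [CommRing R] {K : Matrix n n R} (hK : K * Kᵀ = 1)
    (A : Matrix n n R) : (K * A * Kᵀ).charpoly = A.charpoly := by
  rw [charpoly_mul_comm, ← mul_assoc, mul_eq_one_comm.mp hK, one_mul]

theorem roots_charpoly_diagonal [CommRing R] [IsDomain R] (d : n → R) :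
    (diagonal d).charpoly.roots = Finset.univ.val.map d := by
  conv_rhs => rw [← Polynomial.roots_multiset_prod_X_sub_C (Finset.univ.val.map d)]
  rw [charpoly_diagonal, Finset.prod_eq_multiset_prod, Multiset.map_map, Function.comp_def]

end Matrix

theorem cplx_mul (A B : Matrix (Fin 4) (Fin 4) ℝ) : cplx (A * B) = cplx A * cplx B :=
  Matrix.map_mul (f := Complex.ofRealHom)

theorem cplx_transpose (A : Matrix (Fin 4) (Fin 4) ℝ) : cplx Aᵀ = (cplx A)ᴴ := by
  ext i j
  simp [cplx]

theorem IsPureCov.passive_conj {K p : Matrix (Fin 4) (Fin 4) ℝ} (hp : IsPureCov p)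
    (hK : IsPassive4 K) : IsPureCov (K * p * Kᵀ) := by
  obtain ⟨⟨hsymm, hpsd⟩, hdet⟩ := hp
  obtain ⟨horth, hsymp⟩ := hK
  refine ⟨⟨?_, ?_⟩, ?_⟩
  · simp only [IsSymm, transpose_mul, transpose_transpose, hsymm.eq, mul_assoc]
  · have hconj : cplx (K * p * Kᵀ) + Complex.I • cplx Omega4
        = cplx K * (cplx p + Complex.I • cplx Omega4) * (cplx K)ᴴ := by
      rw [mul_add, add_mul, mul_smul_comm, smul_mul_assoc, ← cplx_transpose, ← cplx_mul,
        ← cplx_mul, ← cplx_mul, ← cplx_mul, hsymp]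
    rw [hconj]
    exact hpsd.mul_mul_conjTranspose_same _
  · have hdetK : K.det * K.det = 1 := by simpa using congrArg det horth
    rw [det_mul, det_mul, det_transpose, hdet, mul_one, hdetK]

theorem isPassive4_Kbs : IsPassive4 Kbs := by
  set B : Matrix (Fin 4) (Fin 4) ℝ := !![1,0,1,0; 0,1,0,1; -1,0,1,0; 0,-1,0,1]
  have hB : B * Bᵀ = (2 : ℝ) • 1 := by
    ext i j
    fin_cases i <;> fin_cases j <;> simp [B, mul_apply, Fin.sum_univ_four] <;> norm_num
  have hBΩ : B * Omega4 * Bᵀ = (2 : ℝ) • Omega4 := by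
    ext i j
    fin_cases i <;> fin_cases j <;> simp [B, Omega4, mul_apply, Fin.sum_univ_four] <;> norm_num
  have hs : (√2)⁻¹ * (√2)⁻¹ * 2 = (1 : ℝ) := by
    rw [← mul_inv, Real.mul_self_sqrt zero_le_two, inv_mul_cancel₀ two_ne_zero]
  constructor
  · rw [Kbs, transpose_smul, smul_mul, Matrix.mul_smul, smul_smul, hB, smul_smul, hs, one_smul]
  · rw [Kbs, transpose_smul, smul_mul, smul_mul, Matrix.mul_smul, smul_smul, hBΩ, smul_smul, hs,
      one_smul]

/-- Each mode is a minimum-uncertainty state, so `σ + iΩ` is a sum of one rank-one positive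
matrix per mode. -/
theorem posSemidef_cplx_diagonal_add_I_Omega4 {a b c d : ℝ} (hab : a * b = 1) (hcd : c * d = 1) :
    (cplx (diagonal ![a ^ 2, b ^ 2, c ^ 2, d ^ 2]) + Complex.I • cplx Omega4).PosSemidef := by
  have hsum : cplx (diagonal ![a ^ 2, b ^ 2, c ^ 2, d ^ 2]) + Complex.I • cplx Omega4
      = vecMulVec ![(a : ℂ), -Complex.I * b, 0, 0] (star ![(a : ℂ), -Complex.I * b, 0, 0])
        + vecMulVec ![0, 0, (c : ℂ), -Complex.I * d] (star ![0, 0, (c : ℂ), -Complex.I * d]) := by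
    have hab' : (a : ℂ) * b = 1 := by exact_mod_cast hab
    have hcd' : (c : ℂ) * d = 1 := by exact_mod_cast hcd
    ext i j
    simp only [cplx, Omega4, Matrix.add_apply, Matrix.smul_apply, map_apply, vecMulVec_apply,
      Pi.star_apply]
    fin_cases i <;> fin_cases j <;> simp <;> grind [Complex.I_sq]
  rw [hsum]
  exact (posSemidef_vecMulVec_self_star _).add (posSemidef_vecMulVec_self_star _)

theorem isPureCov_piD (r₁ r₂ : ℝ) : IsPureCov (piD r₁ r₂) := by
  have hpiD : piD r₁ r₂ = diagonal ![rexp (-r₁) ^ 2, rexp r₁ ^ 2, rexp r₂ ^ 2, rexp (-r₂) ^ 2] := by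
    simp only [piD, ← Real.exp_nat_mul]
    ring_nf
  have hinv (r : ℝ) : rexp (-r) * rexp r = 1 := by rw [← Real.exp_add, neg_add_cancel, exp_zero]
  refine ⟨⟨diagonal_transpose _, ?_⟩, ?_⟩
  · rw [hpiD]
    exact posSemidef_cplx_diagonal_add_I_Omega4 (hinv r₁) (by rw [mul_comm, hinv])
  · rw [piD, det_diagonal, Fin.prod_univ_four]
    simp [← Real.exp_add]

theorem SOFpure_eq_of_charpoly_roots {A : Matrix (Fin 4) (Fin 4) ℝ} {w x y z : ℝ}
    (h : A.charpoly.roots = {w, x, y, z}) (hwx : w ≤ x) (hxy : x ≤ y) (hyz : y ≤ z) :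
    SOFpure A = (Real.log y + Real.log z) / 2 := by
  have hsorted : sortedEigs A = [w, x, y, z] := by
    simp only [sortedEigs, h, Multiset.insert_eq_cons]
    rw [Multiset.sort_cons, Multiset.sort_cons, Multiset.sort_cons, Multiset.sort_singleton] <;>
      simp only [Multiset.mem_cons, Multiset.mem_singleton, forall_eq_or_imp, forall_eq] <;>
      grind
  simp only [SOFpure, eig, hsorted, List.getD_cons_succ, List.getD_cons_zero]
  ring

theorem SOFpure_conj_piD {K : Matrix (Fin 4) (Fin 4) ℝ} (hK : K * Kᵀ = 1) {r₁ r₂ : ℝ}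
    (hr₁ : 0 ≤ r₁) (hr₂ : 0 ≤ r₂) : SOFpure (K * piD r₁ r₂ * Kᵀ) = r₁ + r₂ := by
  have hroots : (K * piD r₁ r₂ * Kᵀ).charpoly.roots
      = {rexp (-(2 * r₁)), rexp (2 * r₁), rexp (2 * r₂), rexp (-(2 * r₂))} := by
    rw [charpoly_mul_mul_transpose hK, piD, roots_charpoly_diagonal, Fin.univ_val_map]
    simp only [List.ofFn_succ, cons_val_zero, cons_val_succ, cons_val_fin_one, List.ofFn_zero,
      Multiset.insert_eq_cons]
    rfl
  rcases le_total r₁ r₂ with h | h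
  · rw [SOFpure_eq_of_charpoly_roots (w := rexp (-(2 * r₂))) (x := rexp (-(2 * r₁)))
      (y := rexp (2 * r₁)) (z := rexp (2 * r₂))
      (hroots.trans (by simp only [Multiset.insert_eq_cons, ← Multiset.singleton_add]; abel))
      (by gcongr) (by gcongr; linarith) (by gcongr), Real.log_exp, Real.log_exp]
    ring
  · rw [SOFpure_eq_of_charpoly_roots (w := rexp (-(2 * r₁))) (x := rexp (-(2 * r₂)))
      (y := rexp (2 * r₂)) (z := rexp (2 * r₁))
      (hroots.trans (by simp only [Multiset.insert_eq_cons, ← Multiset.singleton_add]; abel))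
      (by gcongr) (by gcongr; linarith) (by gcongr), Real.log_exp, Real.log_exp]
    ring

/-- `sInf` of a set of reals that is not bounded below is `0`, hence the assumption `h₀`. -/
theorem SOF_le_SOFpure {σ p : Matrix (Fin 4) (Fin 4) ℝ} (hp : IsPureCov p)
    (hσp : (σ - p).PosSemidef) (h₀ : 0 ≤ SOFpure p) : SOF σ ≤ SOFpure p := by
  by_cases hbdd : BddBelow { s : ℝ | ∃ q, IsPureCov q ∧ (σ - q).PosSemidef ∧ s = SOFpure q }
  · exact csInf_le hbdd ⟨p, hp, hσp, rfl⟩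
  · rw [SOF, Real.sInf_of_not_bddBelow hbdd]
    exact h₀

theorem sof_special_state_le_general
    (r₁ r₂ l₁ l₂ α θ : ℝ) (hr₁ : 0 ≤ r₁) (hr₂ : 0 ≤ r₂)
    (hl₁ : 0 ≤ l₁) (hl₂ : l₁ ≤ l₂) :
    SOF (sigmaSp r₁ r₂ l₁ l₂ α θ) ≤ r₁ + r₂ := by
  have hpure : IsPureCov (Kbs * piD r₁ r₂ * Kbsᵀ) :=
    (isPureCov_piD r₁ r₂).passive_conj isPassive4_Kbs
  have hnoise : (l₁ • vecMulVec (phi1v α θ) (phi1v α θ)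
      + l₂ • vecMulVec (phi2v α θ) (phi2v α θ)).PosSemidef :=
    ((posSemidef_vecMulVec_self_star _).smul hl₁).add
      ((posSemidef_vecMulVec_self_star _).smul (hl₁.trans hl₂))
  have hgap : (sigmaSp r₁ r₂ l₁ l₂ α θ - Kbs * piD r₁ r₂ * Kbsᵀ).PosSemidef := by
    rw [sigmaSp, add_assoc, mul_add, add_mul, add_sub_cancel_left,
      ← conjTranspose_eq_transpose_of_trivial]
    exact hnoise.mul_mul_conjTranspose_same Kbs
  have hsof : SOFpure (Kbs * piD r₁ r₂ * Kbsᵀ) = r₁ + r₂ :=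
    SOFpure_conj_piD isPassive4_Kbs.1 hr₁ hr₂
  calc SOF (sigmaSp r₁ r₂ l₁ l₂ α θ) ≤ SOFpure (Kbs * piD r₁ r₂ * Kbsᵀ) :=
        SOF_le_SOFpure hpure hgap (hsof ▸ add_nonneg hr₁ hr₂)
    _ = r₁ + r₂ := hsof

/-- The squeezing of formation of the special state σ_sp is at
most r₁ + r₂. -/
theorem sof_special_state_le
    (r₁ r₂ l₁ l₂ α θ : ℝ) (hr₁ : 0 ≤ r₁) (hr₂ : 0 ≤ r₂)
    (hl₁ : 0 ≤ l₁) (hl₂ : l₁ ≤ l₂) (hα : |α| ≤ Real.exp (-(r₁ + r₂))) :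
    SOF (sigmaSp r₁ r₂ l₁ l₂ α θ) ≤ r₁ + r₂ :=
  sof_special_state_le_general r₁ r₂ l₁ l₂ α θ hr₁ hr₂ hl₁ hl₂

end
end

section
/- Let r1, r2 ≥ 0, λ2 ≥ 0 and α ∈ ℝ with |α| ≤ e^{-(r1+r2)}, let σ_dcc = K_bs (π_d(r1,r2) + λ2·N_α) K_bs^T, and let S_2(r) = K_bs · diag(e^{r}, e^{−r}, e^{−r}, e^{r}) · K_bs^T be the two-mode squeezer. Then the state S_2(r) σ_dcc S_2(r)^T is separable, i.e., its partial transpose satisfies Λ S_2(r) σ_dcc S_2(r)^T Λ + iΩ ⪰ 0, if and only if (r1+r2)/2 ≤ r ≤ (1/4)·[ ln((λ2 + e^{2r1})/(1 + λ2 α² e^{2r1})) + ln((λ2 + e^{2r2})/(1 + λ2 α² e^{2r2})) ]. -/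
open Matrix Real ComplexOrder

noncomputable section

/-!
Conjugation by `S₂(r)` only rescales the quadratures in the beam-splitter frame, so the state is
`K_bs · dccGen Q P · K_bsᵀ` with uncorrelated x- and p-blocks `Q`, `P`. Its partial transpose is
again of this form, and for such a matrix `σ + iΩ ⪰ 0` means `Q ⪰ P⁻¹`, i.e. for `2 × 2` blocks a
trace and a determinant inequality. Here the trace inequality always holds, and the determinant
inequality, cleared of denominators, reads `(e^{4r} - e^{2(r₁+r₂)}) (UV - e^{4r}) ≥ 0`, where
`U`, `V` are the arguments of the two logarithms. The bound `|α| ≤ e^{-(r₁+r₂)}` gives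
`e^{2(r₁+r₂)} ≤ UV`, so this is exactly the interval.
-/

lemma Kbs_transpose_mul_self : Kbsᵀ * Kbs = 1 := by
  ext i j
  fin_cases i <;> fin_cases j <;>
    simp [Kbs, Matrix.mul_apply, Fin.sum_univ_four, TsirelsonInequality.sqrt_two_inv_mul_self] <;>
    norm_num

lemma Kbs_mul_mul_Kbs_transpose (A : Matrix (Fin 4) (Fin 4) ℝ) :
    Kbs * A * Kbsᵀ = (2:ℝ)⁻¹ • (!![1,0,1,0; 0,1,0,1; -1,0,1,0; 0,-1,0,1] * A *
      !![1,0,-1,0; 0,1,0,-1; 1,0,1,0; 0,1,0,1]) := by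
  rw [Kbs, Matrix.transpose_smul, Matrix.smul_mul, Matrix.smul_mul, Matrix.mul_smul, smul_smul,
    TsirelsonInequality.sqrt_two_inv_mul_self]
  congr 2
  ext i j
  fin_cases i <;> fin_cases j <;> rfl

lemma Kbs_conj_mul_Kbs_conj (A B : Matrix (Fin 4) (Fin 4) ℝ) :
    Kbs * A * Kbsᵀ * (Kbs * B * Kbsᵀ) = Kbs * (A * B) * Kbsᵀ := by
  simp only [Matrix.mul_assoc]
  rw [← Matrix.mul_assoc Kbsᵀ, Kbs_transpose_mul_self, Matrix.one_mul]

lemma S2_transpose (r : ℝ) : (S2 r)ᵀ = S2 r := by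
  simp only [S2, Matrix.transpose_mul, Matrix.transpose_transpose, Matrix.diagonal_transpose,
    Matrix.mul_assoc]

lemma S2_mul_sigmaDcc_mul_S2_transpose (r r₁ r₂ l α : ℝ) :
    S2 r * sigmaDcc r₁ r₂ l α * (S2 r)ᵀ =
      Kbs * dccGen
        !![exp (2*r) * ((exp (2*r₁))⁻¹ + l*α^2), l*α; l*α, (exp (2*r))⁻¹ * (exp (2*r₂) + l)]
        !![(exp (2*r))⁻¹ * (exp (2*r₁) + l), l*α; l*α, exp (2*r) * ((exp (2*r₂))⁻¹ + l*α^2)]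
        * Kbsᵀ := by
  rw [S2_transpose, S2, sigmaDcc, Kbs_conj_mul_Kbs_conj, Kbs_conj_mul_Kbs_conj]
  congr 2
  have hexp_two_mul : ∀ x : ℝ, exp (2*x) = exp x * exp x := fun x => by rw [← exp_add]; ring_nf
  ext i j
  fin_cases i <;> fin_cases j <;>
    simp [piD, Nmat, dccGen, Matrix.diagonal_mul, Matrix.mul_diagonal, hexp_two_mul, exp_neg] <;>
    field_simp

lemma ptrans_Kbs_conj_dccGen (q₁ q₂ c p₁ p₂ d : ℝ) :
    ptrans (Kbs * dccGen !![q₁, c; c, q₂] !![p₁, d; d, p₂] * Kbsᵀ) =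
      dccGen !![(q₁ + q₂)/2 + c, (q₂ - q₁)/2; (q₂ - q₁)/2, (q₁ + q₂)/2 - c]
        !![(p₁ + p₂)/2 + d, (p₁ - p₂)/2; (p₁ - p₂)/2, (p₁ + p₂)/2 - d] := by
  rw [Kbs_mul_mul_Kbs_transpose]
  ext i j
  fin_cases i <;> fin_cases j <;>
    simp [ptrans, Lam, dccGen, Matrix.mul_apply, Fin.sum_univ_four] <;> ring

-- The determinant is `det P · det (Q - P⁻¹)`.
lemma det_cplx_dccGen_add_I_smul_Omega4 (q₁ q₂ c p₁ p₂ d : ℝ) :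
    (cplx (dccGen !![q₁, c; c, q₂] !![p₁, d; d, p₂]) + Complex.I • cplx Omega4).det =
      (((q₁*q₂ - c^2)*(p₁*p₂ - d^2) + 1 - (q₁*p₁ + q₂*p₂ + 2*c*d) : ℝ) : ℂ) := by
  simp [cplx, Omega4, dccGen, Matrix.det_succ_row_zero, Fin.sum_univ_succ, Fin.succAbove]
  linear_combination ((q₂*p₂ : ℂ) + 2*c*d - 1) * Complex.I_sq

lemma quadratic_form_two_nonneg {a b c : ℝ} (htr : 0 ≤ a + c) (hdet : b^2 ≤ a*c) (x y : ℝ) :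
    0 ≤ a*x^2 + 2*b*x*y + c*y^2 := by
  have hsum_sq : (a + c) * (a*x^2 + 2*b*x*y + c*y^2) =
      (a*x + b*y)^2 + (b*x + c*y)^2 + (a*c - b^2)*(x^2 + y^2) := by ring
  rcases htr.eq_or_lt with h | h
  · have ha : a = 0 := by nlinarith [sq_nonneg a, sq_nonneg b]
    have hb : b = 0 := by nlinarith [sq_nonneg b]
    subst ha hb
    nlinarith
  · refine nonneg_of_mul_nonneg_right ?_ h
    rw [hsum_sq]
    positivity

/- Completing the square in `w`: with `δ = det P` and `z = δ (w - P⁻¹u)`,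
`δ² (uᵀQu + wᵀPw - 2 u⬝w) = zᵀPz + δ uᵀ(δQ - adj P)u`. -/
lemma dcc_form_nonneg {q₁ q₂ c p₁ p₂ d : ℝ} (hp : 0 < p₁ + p₂) (hδ : 0 < p₁*p₂ - d^2)
    (htr : p₁ + p₂ ≤ (q₁ + q₂) * (p₁*p₂ - d^2))
    (hdet : q₁*p₁ + q₂*p₂ + 2*c*d ≤ (q₁*q₂ - c^2)*(p₁*p₂ - d^2) + 1) (u₁ u₂ w₁ w₂ : ℝ) :
    0 ≤ q₁*u₁^2 + 2*c*u₁*u₂ + q₂*u₂^2 + (p₁*w₁^2 + 2*d*w₁*w₂ + p₂*w₂^2) - 2*(u₁*w₁ + u₂*w₂) := by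
  set δ := p₁*p₂ - d^2 with hδ_def
  set z₁ := δ*w₁ - (p₂*u₁ - d*u₂) with hz₁
  set z₂ := δ*w₂ - (p₁*u₂ - d*u₁) with hz₂
  have hz := quadratic_form_two_nonneg (a := p₁) (b := d) (c := p₂) hp.le (by linarith) z₁ z₂
  have hu := quadratic_form_two_nonneg (a := q₁*δ - p₂) (b := c*δ + d) (c := q₂*δ - p₁)
    (by linarith) (by nlinarith) u₁ u₂
  have hsplit : δ^2 * (q₁*u₁^2 + 2*c*u₁*u₂ + q₂*u₂^2 + (p₁*w₁^2 + 2*d*w₁*w₂ + p₂*w₂^2)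
      - 2*(u₁*w₁ + u₂*w₂)) =
      (p₁*z₁^2 + 2*d*z₁*z₂ + p₂*z₂^2)
        + δ * ((q₁*δ - p₂)*u₁^2 + 2*(c*δ + d)*u₁*u₂ + (q₂*δ - p₁)*u₂^2) := by
    rw [hz₁, hz₂, hδ_def]; ring
  refine nonneg_of_mul_nonneg_right ?_ (pow_pos hδ 2)
  rw [hsplit]
  exact add_nonneg hz (mul_nonneg hδ.le hu)

lemma posSemidef_cplx_dccGen_add_I_smul_Omega4 {q₁ q₂ c p₁ p₂ d : ℝ} (hp : 0 < p₁ + p₂)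
    (hδ : 0 < p₁*p₂ - d^2) (htr : p₁ + p₂ ≤ (q₁ + q₂) * (p₁*p₂ - d^2))
    (hdet : q₁*p₁ + q₂*p₂ + 2*c*d ≤ (q₁*q₂ - c^2)*(p₁*p₂ - d^2) + 1) :
    (cplx (dccGen !![q₁, c; c, q₂] !![p₁, d; d, p₂]) + Complex.I • cplx Omega4).PosSemidef := by
  refine Matrix.PosSemidef.of_dotProduct_mulVec_nonneg ?_ fun v => ?_
  · ext i j
    fin_cases i <;> fin_cases j <;> simp [cplx, Omega4, dccGen]
  · -- the real part is the form of `dcc_form_nonneg` at `(Re x, Im p)` plus at `(Im x, -Re p)`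
    have hre := dcc_form_nonneg hp hδ htr hdet (v 0).re (v 2).re (v 1).im (v 3).im
    have him := dcc_form_nonneg hp hδ htr hdet (v 0).im (v 2).im (-(v 1).re) (-(v 3).re)
    rw [Complex.nonneg_iff]
    simp [cplx, Omega4, dccGen, Matrix.mulVec, dotProduct, Fin.sum_univ_four]
    constructor
    · linarith
    · ring

/- In the beam-splitter frame the partial transpose swaps the two `p`-quadratures, so the criterion
is applied to `Q` and the swapped `P`: hence the crossed products `q₁ p₂ + q₂ p₁`. -/
lemma isSep_Kbs_conj_dccGen_iff {q₁ q₂ c p₁ p₂ d : ℝ} (hp : 0 < p₁ + p₂)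
    (hδ : 0 < p₁*p₂ - d^2) (htr : p₁ + p₂ ≤ (q₁ + q₂) * (p₁*p₂ - d^2)) :
    IsSep (Kbs * dccGen !![q₁, c; c, q₂] !![p₁, d; d, p₂] * Kbsᵀ) ↔
      q₁*p₂ + q₂*p₁ + 2*c*d ≤ (q₁*q₂ - c^2)*(p₁*p₂ - d^2) + 1 := by
  rw [IsSep, ptrans_Kbs_conj_dccGen]
  constructor
  · intro h
    have hdet := h.det_nonneg
    rw [det_cplx_dccGen_add_I_smul_Omega4, Complex.zero_le_real] at hdet
    linarith
  · intro h
    apply posSemidef_cplx_dccGen_add_I_smul_Omega4 <;> linarith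

lemma isSep_Kbs_conj_dccGen_squeezed_iff {a b Y l α : ℝ} (ha : 0 < a) (hb : 0 < b) (hY : 0 < Y)
    (hl : 0 ≤ l) (hαab : α^2 * (a*b) ≤ 1) :
    IsSep (Kbs * dccGen !![Y * (a⁻¹ + l*α^2), l*α; l*α, Y⁻¹ * (b + l)]
        !![Y⁻¹ * (a + l), l*α; l*α, Y * (b⁻¹ + l*α^2)] * Kbsᵀ) ↔
      a*b ≤ Y^2 ∧ Y^2 ≤ (l + a) / (1 + l*α^2*a) * ((l + b) / (1 + l*α^2*b)) := by
  set U := (l + a) / (1 + l*α^2*a)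
  set V := (l + b) / (1 + l*α^2*b)
  have hδ : Y⁻¹ * (a + l) * (Y * (b⁻¹ + l*α^2)) - (l*α)^2 = (a + l + l*α^2*a*b) / b := by
    field_simp; ring
  have htr : (Y * (a⁻¹ + l*α^2) + Y⁻¹ * (b + l)) * ((a + l + l*α^2*a*b) / b)
      - (Y⁻¹ * (a + l) + Y * (b⁻¹ + l*α^2)) =
      (l * (a^2 + a^2*b^2*α^2 + Y^2 + Y^2*a^2*α^2)
        + l^2 * (a + a^2*b*α^2 + Y^2*a*α^2 + Y^2*a^2*b*α^4)) / (a*b*Y) := by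
    field_simp; ring
  have hgap : (Y * (a⁻¹ + l*α^2) * (Y⁻¹ * (b + l)) - (l*α)^2) * ((a + l + l*α^2*a*b) / b) + 1
      - (Y * (a⁻¹ + l*α^2) * (Y * (b⁻¹ + l*α^2)) + Y⁻¹ * (b + l) * (Y⁻¹ * (a + l))
        + 2 * (l*α) * (l*α)) =
      (1 + l*α^2*a) * (1 + l*α^2*b) / (a*b*Y^2) * -((Y^2 - a*b) * (Y^2 - U*V)) := by
    simp only [U, V]
    field_simp; ring
  have habUV : a*b ≤ U*V := by
    have h₁ : b * (1 + l*α^2*a) ≤ l + b := by nlinarith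
    have h₂ : a * (1 + l*α^2*b) ≤ l + a := by nlinarith
    rw [div_mul_div_comm, le_div_iff₀ (by positivity)]
    calc a*b * ((1 + l*α^2*a) * (1 + l*α^2*b)) = (a * (1 + l*α^2*b)) * (b * (1 + l*α^2*a)) := by
          ring
      _ ≤ (l + a) * (l + b) := mul_le_mul h₂ h₁ (by positivity) (by positivity)
  rw [isSep_Kbs_conj_dccGen_iff (by positivity) (by rw [hδ]; positivity)
    (by rw [hδ, ← sub_nonneg, htr]; positivity), hδ, ← sub_nonneg, hgap,
    mul_nonneg_iff_of_pos_left (by positivity), neg_nonneg, sub_mul_sub_nonpos_iff _ habUV]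

theorem separability_interval_general
    (r₁ r₂ l₂ α r : ℝ)
    (hl₂ : 0 ≤ l₂) (hα : |α| ≤ Real.exp (-(r₁ + r₂))) :
    IsSep (S2 r * sigmaDcc r₁ r₂ l₂ α * (S2 r)ᵀ) ↔
      ((r₁ + r₂) / 2 ≤ r ∧
        r ≤ (1/4) *
          (Real.log ((l₂ + Real.exp (2*r₁)) / (1 + l₂ * α^2 * Real.exp (2*r₁)))
            + Real.log ((l₂ + Real.exp (2*r₂)) / (1 + l₂ * α^2 * Real.exp (2*r₂))))) := by
  have hexp_sq : ∀ x : ℝ, exp (2*x)^2 = exp (4*x) := fun x => by rw [← exp_nat_mul]; ring_nf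
  have hαab : α^2 * (exp (2*r₁) * exp (2*r₂)) ≤ 1 := by
    calc α^2 * (exp (2*r₁) * exp (2*r₂)) = (|α| * exp (r₁ + r₂))^2 := by
          rw [mul_pow, sq_abs, ← exp_add, ← exp_nat_mul]; ring_nf
      _ ≤ (exp (-(r₁ + r₂)) * exp (r₁ + r₂))^2 := by gcongr
      _ = 1 := by rw [← exp_add, neg_add_cancel, exp_zero, one_pow]
  have hlower : (r₁ + r₂) / 2 ≤ r ↔ exp (2*r₁) * exp (2*r₂) ≤ exp (2*r)^2 := by
    rw [hexp_sq, ← exp_add, exp_le_exp]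
    constructor <;> intro h <;> linarith
  have hupper : r ≤ (1/4) *
        (log ((l₂ + exp (2*r₁)) / (1 + l₂ * α^2 * exp (2*r₁)))
          + log ((l₂ + exp (2*r₂)) / (1 + l₂ * α^2 * exp (2*r₂)))) ↔
      exp (2*r)^2 ≤ (l₂ + exp (2*r₁)) / (1 + l₂ * α^2 * exp (2*r₁))
        * ((l₂ + exp (2*r₂)) / (1 + l₂ * α^2 * exp (2*r₂))) := by
    rw [hexp_sq, ← log_mul (by positivity) (by positivity), ← le_log_iff_exp_le (by positivity)]
    constructor <;> intro h <;> linarith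
  rw [S2_mul_sigmaDcc_mul_S2_transpose,
    isSep_Kbs_conj_dccGen_squeezed_iff (exp_pos _) (exp_pos _) (exp_pos _) hl₂ hαab, hlower, hupper]

/-- S₂(r) σ_dcc S₂(r)ᵀ is separable iff
(r₁+r₂)/2 ≤ r ≤ (1/4)·Σⱼ ln((λ₂+e^{2rⱼ})/(1+λ₂α²e^{2rⱼ})). -/
theorem separability_interval
    (r₁ r₂ l₂ α r : ℝ) (hr₁ : 0 ≤ r₁) (hr₂ : 0 ≤ r₂)
    (hl₂ : 0 ≤ l₂) (hα : |α| ≤ Real.exp (-(r₁ + r₂))) :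
    IsSep (S2 r * sigmaDcc r₁ r₂ l₂ α * (S2 r)ᵀ) ↔
      ((r₁ + r₂) / 2 ≤ r ∧
        r ≤ (1/4) *
          (Real.log ((l₂ + Real.exp (2*r₁)) / (1 + l₂ * α^2 * Real.exp (2*r₁)))
            + Real.log ((l₂ + Real.exp (2*r₂)) / (1 + l₂ * α^2 * Real.exp (2*r₂))))) :=
  separability_interval_general r₁ r₂ l₂ α r hl₂ hα
end
end

section
/- Let r1, r2 ≥ 0, λ2 > 0 and α ∈ ℝ. Then the interval [(r1+r2)/2, (1/4)·( ln((λ2 + e^{2r1})/(1 + λ2 α² e^{2r1})) + ln((λ2 + e^{2r2})/(1 + λ2 α² e^{2r2})) )] is nonempty, i.e., (r1+r2)/2 ≤ (1/4)·Σ_{j=1}^{2} ln((λ2 + e^{2r_j})/(1 + λ2 α² e^{2r_j})), if and only if |α| ≤ e^{−(r1+r2)}. -/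
open Matrix Real ComplexOrder

noncomputable section

/-! With `a = e^{2r₁}` and `b = e^{2r₂}`, exponentiating turns the condition into
`a b (1 + λ α² a)(1 + λ α² b) ≤ (λ + a)(λ + b)`. The difference of the two sides factors as
`λ (a + b + λ (1 + a b α²)) (1 - a b α²)` with a positive first factor, so the condition is
`a b α² ≤ 1`, i.e. `(e^{r₁ + r₂} |α|)² ≤ 1`. -/

theorem mul_le_div_mul_div_iff_mul_mul_le_one {a b l t : ℝ} (ha : 0 ≤ a) (hb : 0 ≤ b)
    (hl : 0 < l) (ht : 0 ≤ t) :
    a * b ≤ (l + a) / (1 + l * t * a) * ((l + b) / (1 + l * t * b)) ↔ a * b * t ≤ 1 := by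
  rw [div_mul_div_comm, le_div_iff₀ (by positivity), ← sub_nonneg, ← sub_nonneg (b := a * b * t)]
  have hfactor : (l + a) * (l + b) - a * b * ((1 + l * t * a) * (1 + l * t * b))
      = l * (a + b + l * (1 + a * b * t)) * (1 - a * b * t) := by ring
  have hpos : 0 < l * (a + b + l * (1 + a * b * t)) := by positivity
  rw [hfactor, mul_nonneg_iff_of_pos_left hpos]

theorem abs_le_exp_neg_iff (s α : ℝ) : |α| ≤ exp (-s) ↔ exp s ^ 2 * α ^ 2 ≤ 1 := by
  rw [← sq_abs α, ← mul_pow, sq_le_one_iff₀ (by positivity), exp_neg, inv_eq_one_div,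
    le_div_iff₀' (exp_pos s)]

theorem separability_interval_nonempty_iff_general
    (r₁ r₂ l₂ α : ℝ) (hl₂ : 0 < l₂) :
    (r₁ + r₂) / 2 ≤ (1/4) *
        (Real.log ((l₂ + Real.exp (2*r₁)) / (1 + l₂ * α^2 * Real.exp (2*r₁)))
          + Real.log ((l₂ + Real.exp (2*r₂)) / (1 + l₂ * α^2 * Real.exp (2*r₂)))) ↔
      |α| ≤ Real.exp (-(r₁ + r₂)) := by
  have ha := (exp_pos (2 * r₁)).le
  have hb := (exp_pos (2 * r₂)).le
  have hexp : exp (r₁ + r₂) ^ 2 = exp (2 * r₁) * exp (2 * r₂) := by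
    rw [← exp_nat_mul, ← exp_add]; ring_nf
  rw [abs_le_exp_neg_iff, hexp, ← mul_le_div_mul_div_iff_mul_mul_le_one ha hb hl₂ (sq_nonneg α),
    ← exp_add, ← log_mul (by positivity) (by positivity), ← le_log_iff_exp_le (by positivity)]
  constructor <;> intro h <;> linarith

/-- the separability interval is nonempty iff |α| ≤ e^{-(r₁+r₂)}. -/
theorem separability_interval_nonempty_iff
    (r₁ r₂ l₂ α : ℝ) (hr₁ : 0 ≤ r₁) (hr₂ : 0 ≤ r₂) (hl₂ : 0 < l₂) :
    (r₁ + r₂) / 2 ≤ (1/4) *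
        (Real.log ((l₂ + Real.exp (2*r₁)) / (1 + l₂ * α^2 * Real.exp (2*r₁)))
          + Real.log ((l₂ + Real.exp (2*r₂)) / (1 + l₂ * α^2 * Real.exp (2*r₂)))) ↔
      |α| ≤ Real.exp (-(r₁ + r₂)) :=
  separability_interval_nonempty_iff_general r₁ r₂ l₂ α hl₂

end
end

section
/- Let C_q = [[q1, q3],[q3, q2]] be a real symmetric positive definite 2×2 matrix with Δ = q1q2 − q3² > 0, and suppose q1 + q2 ≥ 1 + Δ. Let π_dcc be the de-cross-correlated pure state with x-block C_q and p-block C_q^{-1}. Then the squeezing of formation of π_dcc, namely half the sum of the logarithms of the two largest eigenvalues of π_dcc, equals ln( (q1 + q2 + √((q1+q2)² − 4Δ)) / (2√Δ) ). -/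
open Matrix Real ComplexOrder

noncomputable section

/-!
`π_dcc` is a coordinate permutation of `C_q ⊕ C_q⁻¹`, so its spectrum is `{a, b, a⁻¹, b⁻¹}`
where `a ≤ b` are the eigenvalues of `C_q`, i.e. `a + b = q₁ + q₂` and `a b = Δ`.
The hypothesis `q₁ + q₂ ≥ 1 + Δ` says `(1 - a)(1 - b) ≤ 0`, i.e. `a ≤ 1 ≤ b`, so the two largest
eigenvalues are `b` and `a⁻¹`, and `S(π_dcc) = ½ ln (b / a) = ln (b / √(a b))`.
-/

open Polynomial in
theorem Matrix.charpoly_fin_two_eq_mul {R : Type*} [CommRing R] [Nontrivial R]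
    (A : Matrix (Fin 2) (Fin 2) R) {a b : R} (htr : A.trace = a + b) (hdet : A.det = a * b) :
    A.charpoly = (X - C a) * (X - C b) := by
  rw [charpoly_fin_two, htr, hdet, C_add, C_mul]
  ring

theorem Matrix.trace_inv_fin_two {K : Type*} [Field K] (A : Matrix (Fin 2) (Fin 2) K) :
    A⁻¹.trace = A.trace / A.det := by
  rw [inv_def, Ring.inverse_eq_inv', trace_smul, adjugate_fin_two, trace_fin_two, trace_fin_two,
    smul_eq_mul, div_eq_inv_mul]
  simp only [of_apply, cons_val', cons_val_zero, cons_val_one, empty_val', cons_val_fin_one,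
    add_comm]

open Polynomial in
theorem Matrix.charpoly_inv_fin_two_eq_mul {K : Type*} [Field K]
    (A : Matrix (Fin 2) (Fin 2) K) {a b : K} (ha : a ≠ 0) (hb : b ≠ 0)
    (htr : A.trace = a + b) (hdet : A.det = a * b) :
    A⁻¹.charpoly = (X - C a⁻¹) * (X - C b⁻¹) := by
  refine A⁻¹.charpoly_fin_two_eq_mul ?_ ?_
  · rw [trace_inv_fin_two, htr, hdet]
    field_simp
    ring
  · rw [det_nonsing_inv, Ring.inverse_eq_inv', hdet, mul_inv]

def quadratureSplit : Fin 4 ≃ Fin 2 ⊕ Fin 2 where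
  toFun := ![.inl 0, .inr 0, .inl 1, .inr 1]
  invFun := Sum.elim ![0, 2] ![1, 3]
  left_inv := by decide
  right_inv := by decide

theorem dccGen_eq_reindex_fromBlocks (Cq Cp : Matrix (Fin 2) (Fin 2) ℝ) :
    dccGen Cq Cp =
      reindex quadratureSplit.symm quadratureSplit.symm (fromBlocks Cq 0 0 Cp) := by
  ext i j
  fin_cases i <;> fin_cases j <;> rfl

theorem charpoly_dccGen (Cq Cp : Matrix (Fin 2) (Fin 2) ℝ) :
    (dccGen Cq Cp).charpoly = Cq.charpoly * Cp.charpoly := by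
  rw [dccGen_eq_reindex_fromBlocks, charpoly_reindex, charpoly_fromBlocks_zero₁₂]

theorem roots_charpoly_dccM {Cq : Matrix (Fin 2) (Fin 2) ℝ} {a b : ℝ} (ha : a ≠ 0) (hb : b ≠ 0)
    (htr : Cq.trace = a + b) (hdet : Cq.det = a * b) :
    (dccM Cq).charpoly.roots = {a, b} + {a⁻¹, b⁻¹} := by
  rw [dccM, charpoly_dccGen, Cq.charpoly_fin_two_eq_mul htr hdet,
    Cq.charpoly_inv_fin_two_eq_mul ha hb htr hdet]
  simp [Polynomial.roots_mul, Polynomial.X_sub_C_ne_zero]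

theorem Multiset.pair_eq_min_max {α : Type*} [LinearOrder α] (x y : α) :
    ({x, y} : Multiset α) = {min x y, max x y} := by
  rcases le_total x y with h | h
  · rw [min_eq_left h, max_eq_right h]
  · rw [min_eq_right h, max_eq_left h, Multiset.pair_comm]

theorem Multiset.sort_four_of_max_le_min {α : Type*} [LinearOrder α] {x y z w : α}
    (h : max x y ≤ min z w) :
    ({x, y, z, w} : Multiset α).sort (· ≤ ·) = [min x y, max x y, min z w, max z w] := by
  have hxy : min x y ≤ max x y := min_le_max
  have hzw : min z w ≤ max z w := min_le_max
  have hsorted : [min x y, max x y, min z w, max z w].Pairwise (· ≤ ·) := by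
    simp only [List.pairwise_cons, List.mem_cons, List.not_mem_nil, or_false, forall_eq_or_imp,
      forall_eq, false_implies, implies_true, List.Pairwise.nil, and_true]
    exact ⟨⟨hxy, hxy.trans h, (hxy.trans h).trans hzw⟩, ⟨h, h.trans hzw⟩, hzw⟩
  have hperm : ({x, y, z, w} : Multiset α) = {min x y, max x y} + {min z w, max z w} := by
    rw [← pair_eq_min_max, ← pair_eq_min_max]
    rfl
  rw [hperm]
  exact List.mergeSort_eq_self _ hsorted

theorem SOFpure_eq_of_roots {A : Matrix (Fin 4) (Fin 4) ℝ} {x y z w : ℝ}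
    (hroots : A.charpoly.roots = {x, y, z, w}) (h : max x y ≤ min z w) :
    SOFpure A = (log z + log w) / 2 := by
  have hsort : sortedEigs A = [min x y, max x y, min z w, max z w] := by
    rw [sortedEigs, hroots, Multiset.sort_four_of_max_le_min h]
  rw [SOFpure, eig, eig, hsort]
  rcases le_total z w with hzw | hzw <;> simp [hzw, add_comm] <;> ring

theorem SOFpure_dccM {Cq : Matrix (Fin 2) (Fin 2) ℝ} {a b : ℝ} (ha : 0 < a) (ha1 : a ≤ 1)
    (hb1 : 1 ≤ b) (htr : Cq.trace = a + b) (hdet : Cq.det = a * b) :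
    SOFpure (dccM Cq) = (log b - log a) / 2 := by
  have hb : 0 < b := by linarith
  have hroots : (dccM Cq).charpoly.roots = {a, b⁻¹, b, a⁻¹} := by
    rw [roots_charpoly_dccM ha.ne' hb.ne' htr hdet, Multiset.pair_comm a⁻¹]
    simp only [Multiset.insert_eq_cons, Multiset.cons_add, Multiset.singleton_add]
    rw [Multiset.cons_swap b]
  rw [SOFpure_eq_of_roots hroots, log_inv]
  · ring
  · have hb_inv : b⁻¹ ≤ 1 := inv_le_one_of_one_le₀ hb1
    have ha_inv : 1 ≤ a⁻¹ := (one_le_inv₀ ha).mpr ha1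
    simp only [max_le_iff, le_min_iff]
    refine ⟨⟨?_, ?_⟩, ?_, ?_⟩ <;> linarith

theorem sof_dcc_pure_general (q1 q2 q3 : ℝ)
    (hΔ : 0 < q1 * q2 - q3^2)
    (hsum : 1 + (q1 * q2 - q3^2) ≤ q1 + q2) :
    SOFpure (dccM !![q1, q3; q3, q2]) =
      Real.log ((q1 + q2 + Real.sqrt ((q1 + q2)^2 - 4 * (q1 * q2 - q3^2)))
        / (2 * Real.sqrt (q1 * q2 - q3^2))) := by
  set Δ := q1 * q2 - q3 ^ 2
  set t := q1 + q2
  set D := √(t ^ 2 - 4 * Δ)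
  have hD : D ^ 2 = t ^ 2 - 4 * Δ := sq_sqrt (by nlinarith [sq_nonneg (Δ - 1)])
  have hD0 : 0 ≤ D := sqrt_nonneg _
  set a := (t - D) / 2
  set b := (t + D) / 2
  have hab : a * b = Δ := by linear_combination (-1 / 4 : ℝ) * hD
  have hab_sum : a + b = t := by simp only [a, b]; ring
  have hab_le : a ≤ b := by simp only [a, b]; linarith
  have hsep : (1 - a) * (1 - b) ≤ 0 := by
    rw [show (1 - a) * (1 - b) = 1 - (a + b) + a * b by ring, hab_sum, hab]
    linarith
  have hb1 : 1 ≤ b := by nlinarith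
  have ha1 : a ≤ 1 := by nlinarith
  have ha : 0 < a := by nlinarith
  have hb : 0 < b := by linarith
  rw [SOFpure_dccM ha ha1 hb1 (by rw [trace_fin_two_of, hab_sum])
    (by rw [det_fin_two_of, hab]; ring), ← div_div, log_div (x := b) hb.ne' (sqrt_ne_zero'.2 hΔ),
    log_sqrt hΔ.le, ← hab, log_mul ha.ne' hb.ne']
  ring

/-- the squeezing of formation of the de-cross-correlated pure
state equals ln((q₁+q₂+√((q₁+q₂)²−4Δ))/(2√Δ)). -/
theorem sof_dcc_pure (q1 q2 q3 : ℝ)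
    (hpd : (!![q1, q3; q3, q2] : Matrix (Fin 2) (Fin 2) ℝ).PosDef)
    (hΔ : 0 < q1 * q2 - q3^2)
    (hsum : 1 + (q1 * q2 - q3^2) ≤ q1 + q2) :
    SOFpure (dccM !![q1, q3; q3, q2]) =
      Real.log ((q1 + q2 + Real.sqrt ((q1 + q2)^2 - 4 * (q1 * q2 - q3^2)))
        / (2 * Real.sqrt (q1 * q2 - q3^2))) :=
  sof_dcc_pure_general q1 q2 q3 hΔ hsum

end
end

section
/- Let C_q = [[q1, q3],[q3, q2]] be a real symmetric positive definite 2×2 matrix with Δ = q1q2 − q3² > 0, let m = q1q2/Δ, and let π_dcc be the de-cross-correlated pure state with x-block C_q and p-block C_q^{-1}. Then the smallest symplectic eigenvalue of the partial transpose of π_dcc equals √m − √(m − 1), i.e., ν1↑(Λ π_dcc Λ) = √m − √(m−1). -/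
open Matrix Real ComplexOrder

noncomputable section

/-! In the (x, p) block decomposition a de-cross-correlated state is σ = A ⊕ B, and
(iΩσ)² = BA ⊕ AB, so the characteristic polynomial of iΩσ is X⁴ - tr(AB) X² + det(AB) and the
symplectic eigenvalues are the square roots of the eigenvalues of AB, each counted twice.
Partial transposition flips the sign of p₂, turning the p-block C_q⁻¹ into J C_q⁻¹ J with
J = diag(1, -1). Then det(AB) = 1 and tr(AB) = 2(q₁q₂ + q₃²)/Δ = 4m - 2, so the eigenvalues of
AB are (√m ± √(m - 1))². -/

open Polynomial

theorem Polynomial.roots_biquadratic {R : Type*} [CommRing R] [IsDomain R] (u v : R) :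
    (X ^ 4 - C (u ^ 2 + v ^ 2) * X ^ 2 + C (u ^ 2 * v ^ 2) : R[X]).roots = {u, -u, v, -v} := by
  have hprod : (X ^ 4 - C (u ^ 2 + v ^ 2) * X ^ 2 + C (u ^ 2 * v ^ 2) : R[X]) =
      (({u, -u, v, -v} : Multiset R).map fun a => X - C a).prod := by
    simp only [Multiset.insert_eq_cons, Multiset.map_cons, Multiset.prod_cons,
      Multiset.map_singleton, Multiset.prod_singleton, C_add, C_mul, C_pow, C_neg]
    ring
  rw [hprod, roots_multiset_prod_X_sub_C]

theorem Matrix.trace_mul_partialTranspose_inv {K : Type*} [Field K] (a b c d : K) :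
    (!![a, b; c, d] * (!![1, 0; 0, -1] * !![a, b; c, d]⁻¹ * !![1, 0; 0, -1])).trace =
      2 * (a * d + b * c) / (a * d - b * c) := by
  rw [inv_def, det_fin_two_of, adjugate_fin_two_of, Ring.inverse_eq_inv]
  simp [trace_fin_two]
  ring

theorem Matrix.det_mul_partialTranspose_inv {R : Type*} [CommRing R]
    (A : Matrix (Fin 2) (Fin 2) R) (hA : IsUnit A.det) :
    (A * (!![1, 0; 0, -1] * A⁻¹ * !![1, 0; 0, -1])).det = 1 := by
  rw [det_mul, det_mul, det_mul, det_nonsing_inv, det_fin_two_of]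
  linear_combination Ring.mul_inverse_cancel _ hA

theorem ptrans_dccGen (A B : Matrix (Fin 2) (Fin 2) ℝ) :
    ptrans (dccGen A B) = dccGen A (!![1, 0; 0, -1] * B * !![1, 0; 0, -1]) := by
  ext i j
  fin_cases i <;> fin_cases j <;>
    simp [ptrans, dccGen, Lam, mul_apply, Fin.sum_univ_four, vecMul, dotProduct]

theorem I_smul_cplx_Omega4_mul_cplx_dccGen (A B : Matrix (Fin 2) (Fin 2) ℝ) :
    Complex.I • (cplx Omega4 * cplx (dccGen A B)) =
      !![0, Complex.I * B 0 0, 0, Complex.I * B 0 1;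
         -(Complex.I * A 0 0), 0, -(Complex.I * A 0 1), 0;
         0, Complex.I * B 1 0, 0, Complex.I * B 1 1;
         -(Complex.I * A 1 0), 0, -(Complex.I * A 1 1), 0] := by
  ext i j
  fin_cases i <;> fin_cases j <;>
    simp [cplx, Omega4, dccGen, mul_apply, Fin.sum_univ_four]

theorem charpoly_I_smul_cplx_Omega4_mul_cplx_dccGen (A B : Matrix (Fin 2) (Fin 2) ℝ) :
    (Complex.I • (cplx Omega4 * cplx (dccGen A B))).charpoly =
      X ^ 4 - C (((A * B).trace : ℝ) : ℂ) * X ^ 2 + C (((A * B).det : ℝ) : ℂ) := by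
  have hI2 : (C Complex.I : ℂ[X]) ^ 2 = -1 := by rw [← C_pow, Complex.I_sq, C_neg, C_1]
  have hI4 : (C Complex.I : ℂ[X]) ^ 4 = 1 := by rw [show 4 = 2 * 2 from rfl, pow_mul, hI2]; norm_num
  rw [I_smul_cplx_Omega4_mul_cplx_dccGen, charpoly, det_succ_row_zero]
  simp [Fin.sum_univ_succ, det_succ_row_zero, charmatrix_apply, trace_fin_two, mul_apply,
    Fin.succAbove, submatrix]
  ring_nf
  simp only [hI2, hI4]
  ring

theorem sympEigs_dccGen (A B : Matrix (Fin 2) (Fin 2) ℝ) (u v : ℝ)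
    (htrace : (A * B).trace = u ^ 2 + v ^ 2) (hdet : (A * B).det = u ^ 2 * v ^ 2) :
    sympEigs (dccGen A B) = {|u|, |u|, |v|, |v|} := by
  rw [sympEigs, charpoly_I_smul_cplx_Omega4_mul_cplx_dccGen, htrace, hdet]
  push_cast
  rw [roots_biquadratic]
  simp

theorem nu1_eq_of_sympEigs_eq {σ : Matrix (Fin 4) (Fin 4) ℝ} {u v : ℝ} (huv : u ≤ v)
    (h : sympEigs σ = {u, u, v, v}) : nu1 σ = u := by
  have hsorted : ({u, u, v, v} : Multiset ℝ).sort (· ≤ ·) = [u, u, v, v] :=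
    List.mergeSort_eq_self _ (by simp [huv])
  rw [nu1, h, hsorted]
  rfl

theorem nu1_ptrans_dcc_pure_general (q1 q2 q3 : ℝ)
    (hΔ : 0 < q1 * q2 - q3^2) :
    nu1 (ptrans (dccM !![q1, q3; q3, q2])) =
      Real.sqrt (q1 * q2 / (q1 * q2 - q3^2))
        - Real.sqrt (q1 * q2 / (q1 * q2 - q3^2) - 1) := by
  set m := q1 * q2 / (q1 * q2 - q3 ^ 2) with hm
  have hm_sub_one : m - 1 = q3 ^ 2 / (q1 * q2 - q3 ^ 2) := by
    rw [hm]; field_simp; ring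
  have hm_sub_one_nonneg : 0 ≤ m - 1 := hm_sub_one ▸ by positivity
  have hsq_m : √m ^ 2 = m := Real.sq_sqrt (by linarith)
  have hsq_m_sub_one : √(m - 1) ^ 2 = m - 1 := Real.sq_sqrt hm_sub_one_nonneg
  have ha : 0 < √m - √(m - 1) := sub_pos.2 (Real.sqrt_lt_sqrt hm_sub_one_nonneg (by linarith))
  have hab : √m - √(m - 1) ≤ √m + √(m - 1) := by linarith [Real.sqrt_nonneg (m - 1)]
  have hdet : IsUnit (!![q1, q3; q3, q2] : Matrix (Fin 2) (Fin 2) ℝ).det := by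
    rw [det_fin_two_of]
    exact IsUnit.mk0 _ (by nlinarith)
  refine nu1_eq_of_sympEigs_eq hab ?_
  rw [dccM, ptrans_dccGen, sympEigs_dccGen _ _ (√m - √(m - 1)) (√m + √(m - 1)),
    abs_of_pos ha, abs_of_pos (ha.trans_le hab)]
  · have htrace : 2 * (q1 * q2 + q3 * q3) / (q1 * q2 - q3 * q3) = 2 * m + 2 * (m - 1) := by
      rw [hm_sub_one, hm]; field_simp
    rw [trace_mul_partialTranspose_inv]
    linear_combination htrace - 2 * hsq_m - 2 * hsq_m_sub_one
  · rw [det_mul_partialTranspose_inv _ hdet]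
    linear_combination (-(√m ^ 2 - √(m - 1) ^ 2) - 1) * (hsq_m - hsq_m_sub_one)

/-- the smallest symplectic eigenvalue of the partial transpose
of the de-cross-correlated pure state is √m − √(m−1) with m = q₁q₂/Δ. -/
theorem nu1_ptrans_dcc_pure (q1 q2 q3 : ℝ)
    (hpd : (!![q1, q3; q3, q2] : Matrix (Fin 2) (Fin 2) ℝ).PosDef)
    (hΔ : 0 < q1 * q2 - q3^2) :
    nu1 (ptrans (dccM !![q1, q3; q3, q2])) =
      Real.sqrt (q1 * q2 / (q1 * q2 - q3^2))
        - Real.sqrt (q1 * q2 / (q1 * q2 - q3^2) - 1) :=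
  nu1_ptrans_dcc_pure_general q1 q2 q3 hΔ

end
end

section
/- The auxiliary function h_0 is strictly increasing on [0, ∞): for all real x, y with 0 ≤ x < y, one has h_0[x] < h_0[y]. Equivalently, h is strictly decreasing on (0,1]. -/
open Matrix Real ComplexOrder

noncomputable section

/-
With g(x) = (1+x)²/(4x) one has (1-x)²/(4x) = g(x) - 1, so h = F ∘ g for
F(u) = u log u - (u-1) log(u-1). F is the increment of the strictly convex function t ↦ t log t
over a window of length 1, hence strictly increasing, while g = (x + 1/x + 2)/4 is strictly
decreasing on (0,1]. So h is strictly decreasing on (0,1], and h₀ = h ∘ exp(-·) is strictly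
increasing on [0,∞).
-/

theorem StrictConvexOn.sub_sub_lt_sub_sub {𝕜 : Type*} [Field 𝕜] [LinearOrder 𝕜]
    [IsStrictOrderedRing 𝕜] {s : Set 𝕜} {f : 𝕜 → 𝕜} (hf : StrictConvexOn 𝕜 s f) {d u v : 𝕜}
    (hd : 0 < d) (hu : u - d ∈ s) (hv : v ∈ s) (huv : u < v) :
    f u - f (u - d) < f v - f (v - d) := by
  have hu' : u ∈ s := hf.1.ordConnected.out hu hv ⟨by linarith, huv.le⟩
  have hv' : v - d ∈ s := hf.1.ordConnected.out hu hv ⟨by linarith, by linarith⟩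
  have hslope := calc
    (f u - f (u - d)) / d = (f u - f (u - d)) / (u - (u - d)) := by rw [sub_sub_cancel]
    _ < (f v - f (u - d)) / (v - (u - d)) :=
        hf.secant_strict_mono hu hu' hv (by linarith) (by linarith) huv
    _ = (f (u - d) - f v) / (u - d - v) := by rw [← neg_div_neg_eq, neg_sub, neg_sub]
    _ < (f (v - d) - f v) / (v - d - v) :=
        hf.secant_strict_mono hv hu hv' (by linarith) (by linarith) (by linarith)
    _ = (f v - f (v - d)) / d := by rw [← neg_div_neg_eq, neg_sub, neg_sub, sub_sub_cancel]
  exact (div_lt_div_iff_of_pos_right hd).mp hslope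

lemma strictMonoOn_mul_log_sub_mul_log_sub_one :
    StrictMonoOn (fun u : ℝ => u * log u - (u - 1) * log (u - 1)) (Set.Ici 1) :=
  fun _ hu _ _ huv => strictConvexOn_mul_log.sub_sub_lt_sub_sub one_pos
    (Set.mem_Ici.mpr (sub_nonneg.mpr hu)) (Set.mem_Ici.mpr (by linarith [Set.mem_Ici.mp hu])) huv

lemma one_le_sq_one_add_div (x : ℝ) (hx : 0 < x) : 1 ≤ (1 + x) ^ 2 / (4 * x) := by
  rw [le_div_iff₀ (by positivity)]
  nlinarith [sq_nonneg (1 - x)]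

lemma strictAntiOn_sq_one_add_div :
    StrictAntiOn (fun x : ℝ => (1 + x) ^ 2 / (4 * x)) (Set.Ioc 0 1) := by
  rintro a ⟨ha, -⟩ b ⟨-, hb⟩ hab
  rw [div_lt_div_iff₀ (by linarith) (by linarith)]
  have hab1 : a * b < 1 := by nlinarith
  nlinarith [mul_pos (sub_pos.mpr hab) (sub_pos.mpr hab1)]

lemma hAux_eq (x : ℝ) (hx : 0 < x) :
    hAux x = (1 + x) ^ 2 / (4 * x) * log ((1 + x) ^ 2 / (4 * x))
      - ((1 + x) ^ 2 / (4 * x) - 1) * log ((1 + x) ^ 2 / (4 * x) - 1) := by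
  have hsq : (1 - x) ^ 2 / (4 * x) = (1 + x) ^ 2 / (4 * x) - 1 := by
    field_simp
    ring
  rw [hAux, hsq]

lemma hAux_strictAntiOn : StrictAntiOn hAux (Set.Ioc 0 1) := by
  intro a ha b hb hab
  rw [hAux_eq a ha.1, hAux_eq b hb.1]
  exact strictMonoOn_mul_log_sub_mul_log_sub_one (one_le_sq_one_add_div b hb.1)
    (one_le_sq_one_add_div a ha.1) (strictAntiOn_sq_one_add_div ha hb hab)

lemma h0Aux_strictMonoOn : StrictMonoOn h0Aux (Set.Ici 0) :=
  show StrictMonoOn (hAux ∘ fun x => exp (-x)) _ from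
    hAux_strictAntiOn.comp (fun _ _ _ _ hxy => exp_lt_exp.mpr (neg_lt_neg hxy))
      fun _ hx => ⟨exp_pos _, exp_le_one_iff.mpr (neg_nonpos.mpr hx)⟩

/-- h₀ is strictly increasing on [0, ∞); equivalently, h is
strictly decreasing on (0, 1]. -/
theorem h0_strictMono :
    (∀ x y : ℝ, 0 ≤ x → x < y → h0Aux x < h0Aux y) ∧
    (∀ a b : ℝ, 0 < a → a < b → b ≤ 1 → hAux b < hAux a) :=
  ⟨fun _ _ hx hxy => h0Aux_strictMonoOn hx (Set.mem_Ici.mpr (hx.trans hxy.le)) hxy,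
    fun _ _ ha hab hb => hAux_strictAntiOn ⟨ha, hab.le.trans hb⟩ ⟨ha.trans hab, hb⟩ hab⟩

end
end
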